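/- arXiv:1107.4619 — 3 statements merged into one kernel-verified Lean document; each statement's English description precedes it below -/
import Mathlib

section
/- Let f : ℝ → ℝ be differentiable such that f and x·f(x) are integrable and f' and (x·f(x))' are bounded. Then for every x, the Hilbert transform Hf(x) = (1/π) lim_{ε→0} ∫_{|t|>ε} f(x−t)/t dt exists, and there is a constant C (depending only on ‖f‖₁, ‖f'‖_∞, ‖xf‖₁, ‖(xf)'‖_∞) such that |Hf(x)| ≤ C/(1+|x|) for all x ∈ ℝ. -/
/-! The odd kernel `φ x / t` integrates to zero over every symmetric set, so subtracting it on
`[-1, 1]` does not change the truncated integrals. What remains is bounded by the Lipschitz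
constant `K` near `0` and by `|φ (x - t)|` away from it, hence integrable, and dominated convergence
gives the principal value together with the bound `2 K + ‖φ‖₁`. Decay comes from
`x f(x - t) / t = (x - t) f(x - t) / t + f(x - t)`, which yields `x Hf(x) = H(xf)(x) + (1/π) ∫ f`. -/

open MeasureTheory Filter Real Set Topology
open scoped NNReal

section Integrals

variable {E : Type*} [NormedAddCommGroup E] [NormedSpace ℝ E]

theorem measurableSet_lt_abs (ε : ℝ) : MeasurableSet {t : ℝ | ε < |t|} :=
  measurableSet_lt measurable_const measurable_abs

theorem integral_eq_zero_of_odd {μ : Measure ℝ} [μ.IsNegInvariant] {g : ℝ → E}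
    (hg : Function.Odd g) : ∫ t, g t ∂μ = 0 := by
  have h := integral_neg_eq_self g μ
  simp only [hg _, integral_neg] at h
  have h2 : (2 : ℝ) • ∫ t, g t ∂μ = 0 := by rw [two_smul]; nth_rw 1 [← h]; exact neg_add_cancel _
  simpa using h2

theorem tendsto_setIntegral_lt_abs {F : ℝ → E} (hF : Integrable F) :
    Tendsto (fun ε => ∫ t in {t : ℝ | ε < |t|}, F t) (𝓝[>] 0) (𝓝 (∫ t, F t)) := by
  simp_rw [← integral_indicator (measurableSet_lt_abs _)]
  refine tendsto_integral_filter_of_dominated_convergence (fun t => ‖F t‖)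
    (Eventually.of_forall fun ε => hF.aestronglyMeasurable.indicator (measurableSet_lt_abs ε))
    (Eventually.of_forall fun ε => ae_of_all _ fun t => norm_indicator_le_norm_self _ _)
    hF.norm ?_
  filter_upwards [Measure.ae_ne volume 0] with t ht
  refine tendsto_const_nhds.congr' ?_
  filter_upwards [nhdsWithin_le_nhds (eventually_lt_nhds (abs_pos.2 ht))] with ε hε
  exact (indicator_of_mem (show t ∈ {t : ℝ | ε < |t|} from hε) F).symm

end Integrals

theorem integrable_indicator_Icc_const (a b c : ℝ) :
    Integrable ((Icc a b).indicator fun _ => c) :=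
  (integrableOn_const measure_Icc_lt_top.ne).integrable_indicator measurableSet_Icc

noncomputable def truncatedHilbert (φ : ℝ → ℝ) (ε x : ℝ) : ℝ :=
  ∫ t in {t : ℝ | ε < |t|}, φ (x - t) / t

theorem integrableOn_div_of_lt_abs {φ : ℝ → ℝ} (hφ : Integrable φ) (x : ℝ) {ε : ℝ}
    (hε : 0 < ε) : IntegrableOn (fun t => φ (x - t) / t) {t : ℝ | ε < |t|} := by
  refine (((hφ.comp_sub_left x).abs).const_mul ε⁻¹).integrableOn.mono'
    ((hφ.comp_sub_left x).aestronglyMeasurable.restrict.div₀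
      measurable_id.aestronglyMeasurable) ?_
  filter_upwards [ae_restrict_mem (measurableSet_lt_abs ε)] with t (ht : ε < |t|)
  rw [Real.norm_eq_abs, abs_div, div_eq_inv_mul]
  gcongr

noncomputable def regularizedHilbertIntegrand (φ : ℝ → ℝ) (x t : ℝ) : ℝ :=
  φ (x - t) / t - (Icc (-1) 1).indicator (fun s => φ x / s) t

section Regularized

variable {φ : ℝ → ℝ} {K : ℝ≥0}

theorem abs_regularizedHilbertIntegrand_le (hK : LipschitzWith K φ) (x t : ℝ) :
    |regularizedHilbertIntegrand φ x t| ≤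
      (Icc (-1) 1).indicator (fun _ => (K : ℝ)) t + |φ (x - t)| := by
  unfold regularizedHilbertIntegrand
  by_cases ht : t ∈ Icc (-1) 1
  · rw [indicator_of_mem ht, indicator_of_mem ht, div_sub_div_same]
    rcases eq_or_ne t 0 with rfl | ht0
    · simpa using add_nonneg K.coe_nonneg (abs_nonneg (φ x))
    have hlip : |φ (x - t) - φ x| ≤ K * |t| := by
      simpa [Real.dist_eq, abs_sub_comm] using hK.dist_le_mul (x - t) x
    rw [abs_div, div_le_iff₀ (abs_pos.2 ht0)]
    exact hlip.trans (by gcongr; exact le_add_of_nonneg_right (abs_nonneg _))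
  · rw [indicator_of_notMem ht, indicator_of_notMem ht, sub_zero, zero_add, abs_div]
    have h1 : 1 < |t| := not_le.1 fun h => ht (abs_le.1 h)
    exact div_le_self (abs_nonneg _) h1.le

theorem integrable_regularizedHilbertIntegrand (hφ : Integrable φ) (hK : LipschitzWith K φ)
    (x : ℝ) : Integrable (regularizedHilbertIntegrand φ x) := by
  have hind := integrable_indicator_Icc_const (-1) 1 (K : ℝ)
  exact (hind.add (hφ.comp_sub_left x).abs).mono'
    (((hφ.comp_sub_left x).aestronglyMeasurable.div₀ measurable_id.aestronglyMeasurable).sub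
      ((measurable_const.div measurable_id).indicator measurableSet_Icc).aestronglyMeasurable)
    (ae_of_all _ (abs_regularizedHilbertIntegrand_le hK x))

theorem abs_integral_regularizedHilbertIntegrand_le (hφ : Integrable φ)
    (hK : LipschitzWith K φ) (x : ℝ) :
    |∫ t, regularizedHilbertIntegrand φ x t| ≤ 2 * K + ∫ t, |φ t| := by
  have hind := integrable_indicator_Icc_const (-1) 1 (K : ℝ)
  rw [← Real.norm_eq_abs]
  calc ‖∫ t, regularizedHilbertIntegrand φ x t‖
      ≤ ∫ t, ((Icc (-1) 1).indicator (fun _ => (K : ℝ)) t + |φ (x - t)|) :=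
        norm_integral_le_of_norm_le (hind.add (hφ.comp_sub_left x).abs)
          (ae_of_all _ (abs_regularizedHilbertIntegrand_le hK x))
    _ = 2 * K + ∫ t, |φ t| := by
        rw [integral_add hind (hφ.comp_sub_left x).abs, integral_indicator_const _ measurableSet_Icc,
          integral_sub_left_eq_self (fun t => |φ t|), volume_real_Icc_of_le (by norm_num)]
        norm_num

theorem truncatedHilbert_eq_setIntegral_regularized (hφ : Integrable φ)
    (hK : LipschitzWith K φ) (x : ℝ) {ε : ℝ} (hε : 0 < ε) :
    truncatedHilbert φ ε x = ∫ t in {t : ℝ | ε < |t|}, regularizedHilbertIntegrand φ x t := by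
  set G : ℝ → ℝ := (Icc (-1) 1).indicator fun s => φ x / s
  have hG_zero : ∫ t in {t : ℝ | ε < |t|}, G t = 0 := by
    have hmem : ∀ t : ℝ, -t ∈ Icc (-1 : ℝ) 1 ↔ t ∈ Icc (-1) 1 := fun t => by
      rw [mem_Icc, mem_Icc, neg_le_neg_iff, neg_le]
      tauto
    rw [← integral_indicator (measurableSet_lt_abs ε)]
    refine integral_eq_zero_of_odd fun t => ?_
    simp only [G, indicator_apply, mem_ofPred_eq, abs_neg, hmem]
    split_ifs <;> simp only [div_neg, neg_zero]
  have hG_int : IntegrableOn G {t : ℝ | ε < |t|} :=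
    ((integrableOn_div_of_lt_abs hφ x hε).sub
      (integrable_regularizedHilbertIntegrand hφ hK x).integrableOn).congr_fun
      (fun t _ => by simp [regularizedHilbertIntegrand, G]) (measurableSet_lt_abs ε)
  simp_rw [truncatedHilbert, regularizedHilbertIntegrand]
  rw [integral_sub (integrableOn_div_of_lt_abs hφ x hε) hG_int, hG_zero, sub_zero]

theorem exists_tendsto_truncatedHilbert (hφ : Integrable φ) (hK : LipschitzWith K φ) (x : ℝ) :
    ∃ L, Tendsto (truncatedHilbert φ · x) (𝓝[>] 0) (𝓝 L) ∧ |L| ≤ 2 * K + ∫ t, |φ t| := by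
  refine ⟨_, ?_, abs_integral_regularizedHilbertIntegrand_le hφ hK x⟩
  refine (tendsto_setIntegral_lt_abs (integrable_regularizedHilbertIntegrand hφ hK x)).congr' ?_
  filter_upwards [self_mem_nhdsWithin] with ε hε
  exact (truncatedHilbert_eq_setIntegral_regularized hφ hK x hε).symm

end Regularized

section Decay

variable {f : ℝ → ℝ}

theorem mul_truncatedHilbert (hf : Integrable f) (hg : Integrable fun t => t * f t) (x : ℝ)
    {ε : ℝ} (hε : 0 < ε) :
    x * truncatedHilbert f ε x =
      truncatedHilbert (fun t => t * f t) ε x + ∫ t in {t : ℝ | ε < |t|}, f (x - t) := by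
  rw [truncatedHilbert, truncatedHilbert, ← integral_const_mul,
    ← integral_add (integrableOn_div_of_lt_abs hg x hε) (hf.comp_sub_left x).integrableOn]
  refine setIntegral_congr_fun (measurableSet_lt_abs ε) fun t (ht : ε < |t|) => ?_
  have ht0 : t ≠ 0 := by
    rintro rfl
    rw [abs_zero] at ht
    exact hε.not_gt ht
  field_simp
  ring

theorem mul_eq_add_integral_of_tendsto_truncatedHilbert (hf : Integrable f)
    (hg : Integrable fun t => t * f t) {x Lf Lg : ℝ}
    (hLf : Tendsto (truncatedHilbert f · x) (𝓝[>] 0) (𝓝 Lf))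
    (hLg : Tendsto (truncatedHilbert (fun t => t * f t) · x) (𝓝[>] 0) (𝓝 Lg)) :
    x * Lf = Lg + ∫ t, f t := by
  refine tendsto_nhds_unique (hLf.const_mul x) ?_
  rw [← integral_sub_left_eq_self f volume x]
  refine (hLg.add (tendsto_setIntegral_lt_abs (hf.comp_sub_left x))).congr' ?_
  filter_upwards [self_mem_nhdsWithin] with ε hε
  exact (mul_truncatedHilbert hf hg x hε).symm

end Decay

theorem lipschitzWith_of_abs_deriv_le {f : ℝ → ℝ} {M : ℝ} (hf : Differentiable ℝ f)
    (hM : ∀ x, |deriv f x| ≤ M) : LipschitzWith M.toNNReal f :=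
  lipschitzWith_of_nnnorm_deriv_le hf fun x => by
    rw [← NNReal.coe_le_coe, coe_nnnorm, Real.norm_eq_abs]
    exact (hM x).trans (Real.le_coe_toNNReal M)

theorem abs_mul_one_add_abs_le {a x A B : ℝ} (ha : |a| ≤ A) (hxa : |x * a| ≤ B) :
    |a| * (1 + |x|) ≤ A + B := by
  rw [abs_mul] at hxa
  linarith [mul_one_add |a| |x|, mul_comm |a| |x|]

/-- **classical result.** If `f` is differentiable with `f` and `x·f(x)`
integrable and `f'`, `(x·f(x))'` bounded, then the principal-value Hilbert transform
`Hf(x) = (1/π) lim_{ε→0⁺} ∫_{|t|>ε} f(x−t)/t dt` exists at every `x` and satisfies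
`|Hf(x)| ≤ C/(1+|x|)` for some constant `C`. -/
theorem hilbert_transform_decay (f : ℝ → ℝ) (hdiff : Differentiable ℝ f)
    (hint : Integrable f) (M : ℝ) (hM : ∀ x, |deriv f x| ≤ M)
    (hgint : Integrable (fun x => x * f x)) (M' : ℝ)
    (hM' : ∀ x, |deriv (fun x => x * f x) x| ≤ M') :
    ∃ Hf : ℝ → ℝ,
      (∀ x : ℝ, Tendsto (fun ε : ℝ => (1 / π) * ∫ t in {t : ℝ | ε < |t|}, f (x - t) / t)
        (nhdsWithin 0 (Ioi 0)) (nhds (Hf x))) ∧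
      ∃ C : ℝ, 0 < C ∧ ∀ x : ℝ, |Hf x| ≤ C / (1 + |x|) := by
  choose Lf hLf hLf_le using
    exists_tendsto_truncatedHilbert hint (lipschitzWith_of_abs_deriv_le hdiff hM)
  choose Lg hLg hLg_le using exists_tendsto_truncatedHilbert hgint
    (lipschitzWith_of_abs_deriv_le (differentiable_id.mul hdiff) hM')
  set A := 2 * (M.toNNReal : ℝ) + ∫ t, |f t|
  set B := 2 * (M'.toNNReal : ℝ) + (∫ t, |t * f t|) + |∫ t, f t|
  refine ⟨fun x => 1 / π * Lf x, fun x => (hLf x).const_mul _, (A + B + 1) / π,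
    by positivity, fun x => ?_⟩
  have hxLf : |x * Lf x| ≤ B := by
    rw [mul_eq_add_integral_of_tendsto_truncatedHilbert hint hgint (hLf x) (hLg x)]
    exact (abs_add_le _ _).trans (add_le_add_left (hLg_le x) _)
  rw [le_div_iff₀ (by positivity)]
  calc |1 / π * Lf x| * (1 + |x|) = |Lf x| * (1 + |x|) / π := by
        rw [abs_mul, abs_of_pos (one_div_pos.2 pi_pos)]
        ring
    _ ≤ (A + B + 1) / π := by
        gcongr
        linarith [abs_mul_one_add_abs_le (hLf_le x) hxLf]
end

section
/- Let f : ℝ → ℝ be continuously differentiable with compact support. Then Hf(x) exists for every x and |Hf(x)| ≤ C/(1+|x|) for some constant C depending on f. -/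
open MeasureTheory Filter Real Set

open scoped NNReal Topology

/-!
Folding `t ↦ -t` turns the truncated integral into `∫_{t>ε} (f(x-t) - f(x+t))/t dt`. As `f` is
`K`-Lipschitz, this integrand is bounded by `2K`, so it is integrable at `0` and the limit `ε → 0⁺`
exists. For `t ≥ s` it is bounded by `(|f(x-t)| + |f(x+t)|)/s`, whose integral is at most
`2‖f‖₁/s`; splitting at `t = 1` gives the uniform bound `2K + 2‖f‖₁`. If `f` vanishes outside
`[-R, R]` and `|x| ≥ 2R`, the integrand vanishes for `t ≤ |x|/2`, and the tail bound with
`s = |x|/2` gives the decay `4‖f‖₁/|x|`.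
-/

noncomputable def hilbertSymmIntegrand (f : ℝ → ℝ) (x t : ℝ) : ℝ := (f (x - t) - f (x + t)) / t

theorem tendsto_setIntegral_Ioi_nhdsGT {E : Type*} [NormedAddCommGroup E] [NormedSpace ℝ E]
    {g : ℝ → E} {a : ℝ} (hg : IntegrableOn g (Ioi a)) :
    Tendsto (fun ε => ∫ t in Ioi ε, g t) (𝓝[>] a) (𝓝 (∫ t in Ioi a, g t)) := by
  have hint : IntervalIntegrable g volume (min a a) (max a (a + 1)) := by
    rw [min_self, max_eq_right (by linarith),
      intervalIntegrable_iff_integrableOn_Ioc_of_le (by linarith)]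
    exact hg.mono_set Ioc_subset_Ioi_self
  have hprim : Tendsto (fun ε => ∫ t in a..ε, g t) (𝓝[>] a) (𝓝 0) := by
    have h := intervalIntegral.continuousWithinAt_primitive (b₀ := a) Real.volume_singleton hint
    simpa using (h.mono_of_mem_nhdsWithin (Icc_mem_nhdsGT (by linarith))).tendsto
  have h := (tendsto_const_nhds (x := ∫ t in Ioi a, g t)).sub hprim
  rw [sub_zero] at h
  refine h.congr' ?_
  filter_upwards [self_mem_nhdsWithin] with ε hε
  exact sub_eq_of_eq_add'
    (intervalIntegral.integral_interval_add_Ioi hg (hg.mono_set (Ioi_subset_Ioi hε.le))).symm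

theorem exists_pos_abs_le_div_one_add_abs {J : ℝ → ℝ} {A B r : ℝ} (hr : 0 ≤ r)
    (hA : ∀ x, |J x| ≤ A) (hB : ∀ x, r ≤ |x| → |x| * |J x| ≤ B) :
    ∃ C, 0 < C ∧ ∀ x, |J x| ≤ C / (1 + |x|) := by
  have hA0 : 0 ≤ A := (abs_nonneg _).trans (hA 0)
  have hB0 : 0 ≤ B := (mul_nonneg (abs_nonneg r) (abs_nonneg _)).trans (hB r (le_abs_self r))
  refine ⟨(1 + r) * A + B + 1, by positivity, fun x => ?_⟩
  rw [le_div_iff₀ (by positivity)]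
  rcases le_or_gt r |x| with hfar | hnear
  · nlinarith [hA x, hB x hfar]
  · nlinarith [hA x, abs_nonneg (J x)]

theorem integrableOn_div_self_of_forall_le_abs {g : ℝ → ℝ} (hg : Integrable g) {ε : ℝ}
    (hε : 0 < ε) {s : Set ℝ} (hs : MeasurableSet s) (hsε : ∀ t ∈ s, ε ≤ |t|) :
    IntegrableOn (fun t => g t / t) s := by
  simp_rw [div_eq_mul_inv]
  refine hg.integrableOn.mul_bdd (c := ε⁻¹) measurable_inv.aestronglyMeasurable ?_
  refine ae_restrict_of_forall_mem hs fun t ht => ?_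
  rw [norm_inv, Real.norm_eq_abs]
  exact inv_anti₀ hε (hsε t ht)

theorem integral_abs_gt_div_eq_integral_Ioi_hilbertSymmIntegrand {f : ℝ → ℝ}
    (hf : Integrable f) (x : ℝ) {ε : ℝ} (hε : 0 < ε) :
    ∫ t in {t : ℝ | ε < |t|}, f (x - t) / t = ∫ t in Ioi ε, hilbertSymmIntegrand f x t := by
  have hsub : Integrable (fun t => f (x - t)) := hf.comp_sub_left x
  have hadd : Integrable (fun t => f (x + t)) := hf.comp_add_left x
  have hset : {t : ℝ | ε < |t|} = Iio (-ε) ∪ Ioi ε := by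
    ext t
    simp only [mem_union, mem_Iio, mem_Ioi, lt_abs]
    constructor <;> rintro (h | h) <;> first | (left; linarith) | (right; linarith)
  have hneg : IntegrableOn (fun t => f (x - t) / t) (Iio (-ε)) :=
    integrableOn_div_self_of_forall_le_abs hsub hε measurableSet_Iio fun t ht => by
      rw [abs_of_neg (by linarith [mem_Iio.1 ht])]; linarith [mem_Iio.1 ht]
  have hpos {g : ℝ → ℝ} (hg : Integrable g) : IntegrableOn (fun t => g t / t) (Ioi ε) :=
    integrableOn_div_self_of_forall_le_abs hg hε measurableSet_Ioi fun t ht =>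
      (mem_Ioi.1 ht).le.trans (le_abs_self t)
  have hreflect : ∫ t in Iio (-ε), f (x - t) / t = -∫ t in Ioi ε, f (x + t) / t := by
    rw [← integral_Iic_eq_integral_Iio, ← integral_neg]
    simpa only [neg_neg, sub_neg_eq_add, div_neg] using
      integral_comp_neg_Iic (-ε) (fun t => f (x - -t) / -t)
  rw [hset, setIntegral_union ((Iio_disjoint_Ici (by linarith)).mono_right Ioi_subset_Ici_self)
    measurableSet_Ioi hneg (hpos hsub), hreflect, neg_add_eq_sub,
    ← integral_sub (hpos hsub) (hpos hadd)]
  simp only [hilbertSymmIntegrand, sub_div]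

theorem abs_hilbertSymmIntegrand_le_of_lipschitzWith {f : ℝ → ℝ} {K : ℝ≥0}
    (hf : LipschitzWith K f) (x : ℝ) {t : ℝ} (ht : t ≠ 0) :
    |hilbertSymmIntegrand f x t| ≤ 2 * K := by
  have h := hf.dist_le_mul (x - t) (x + t)
  rw [Real.dist_eq, Real.dist_eq, show x - t - (x + t) = -2 * t by ring, abs_mul, abs_neg,
    abs_two] at h
  rw [hilbertSymmIntegrand, abs_div, div_le_iff₀ (abs_pos.2 ht)]
  linarith

theorem abs_hilbertSymmIntegrand_le_of_le (f : ℝ → ℝ) (x : ℝ) {s t : ℝ} (hs : 0 < s)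
    (hst : s ≤ t) : |hilbertSymmIntegrand f x t| ≤ (|f (x - t)| + |f (x + t)|) / s := by
  rw [hilbertSymmIntegrand, abs_div, abs_of_pos (hs.trans_le hst)]
  exact div_le_div₀ (by positivity) (abs_sub _ _) hs hst

theorem measurable_hilbertSymmIntegrand {f : ℝ → ℝ} (hf : Continuous f) (x : ℝ) :
    Measurable (hilbertSymmIntegrand f x) := by
  unfold hilbertSymmIntegrand
  fun_prop

section Bounds

variable {f : ℝ → ℝ}

theorem integrable_abs_comp_sub_add_abs_comp_add (hf : Integrable f) (x : ℝ) :
    Integrable (fun t => |f (x - t)| + |f (x + t)|) :=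
  (hf.comp_sub_left x).abs.add (hf.comp_add_left x).abs

theorem integral_abs_comp_sub_add_abs_comp_add (hf : Integrable f) (x : ℝ) :
    ∫ t, (|f (x - t)| + |f (x + t)|) = 2 * ∫ t, |f t| := by
  rw [integral_add (hf.comp_sub_left x).abs (hf.comp_add_left x).abs,
    integral_sub_left_eq_self (fun t => |f t|), integral_add_left_eq_self (fun t => |f t|)]
  ring

theorem integrableOn_Ioi_hilbertSymmIntegrand (hfc : Continuous f) (hf : Integrable f) (x : ℝ)
    {s : ℝ} (hs : 0 < s) : IntegrableOn (hilbertSymmIntegrand f x) (Ioi s) :=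
  ((integrable_abs_comp_sub_add_abs_comp_add hf x).div_const s).integrableOn.mono'
    (measurable_hilbertSymmIntegrand hfc x).aestronglyMeasurable.restrict
    (ae_restrict_of_forall_mem measurableSet_Ioi fun _ ht =>
      abs_hilbertSymmIntegrand_le_of_le f x hs (le_of_lt ht))

theorem integrableOn_Ioi_zero_hilbertSymmIntegrand {K : ℝ≥0} (hfK : LipschitzWith K f)
    (hf : Integrable f) (x : ℝ) : IntegrableOn (hilbertSymmIntegrand f x) (Ioi 0) := by
  rw [← Ioc_union_Ioi_eq_Ioi zero_le_one]
  refine IntegrableOn.union ?_ (integrableOn_Ioi_hilbertSymmIntegrand hfK.continuous hf x one_pos)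
  exact Measure.integrableOn_of_bounded (M := 2 * K) measure_Ioc_lt_top.ne
    (measurable_hilbertSymmIntegrand hfK.continuous x).aestronglyMeasurable
    (ae_restrict_of_forall_mem measurableSet_Ioc fun t ht =>
      abs_hilbertSymmIntegrand_le_of_lipschitzWith hfK x ht.1.ne')

theorem abs_integral_Ioi_hilbertSymmIntegrand_le (hf : Integrable f) (x : ℝ) {s : ℝ}
    (hs : 0 < s) : |∫ t in Ioi s, hilbertSymmIntegrand f x t| ≤ 2 * (∫ t, |f t|) / s := by
  have hdom := (integrable_abs_comp_sub_add_abs_comp_add hf x).div_const s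
  rw [← Real.norm_eq_abs]
  calc ‖∫ t in Ioi s, hilbertSymmIntegrand f x t‖
      ≤ ∫ t in Ioi s, (|f (x - t)| + |f (x + t)|) / s :=
        norm_integral_le_of_norm_le hdom.integrableOn
          (ae_restrict_of_forall_mem measurableSet_Ioi fun _ ht =>
            abs_hilbertSymmIntegrand_le_of_le f x hs (le_of_lt ht))
    _ ≤ ∫ t, (|f (x - t)| + |f (x + t)|) / s :=
        setIntegral_le_integral hdom (Eventually.of_forall fun _ => by positivity)
    _ = 2 * (∫ t, |f t|) / s := by rw [integral_div, integral_abs_comp_sub_add_abs_comp_add hf x]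

theorem abs_integral_Ioi_zero_hilbertSymmIntegrand_le {K : ℝ≥0} (hfK : LipschitzWith K f)
    (hf : Integrable f) (x : ℝ) :
    |∫ t in Ioi 0, hilbertSymmIntegrand f x t| ≤ 2 * K + 2 * ∫ t, |f t| := by
  rw [← intervalIntegral.integral_interval_add_Ioi (b := 1)
    (integrableOn_Ioi_zero_hilbertSymmIntegrand hfK hf x)
    (integrableOn_Ioi_hilbertSymmIntegrand hfK.continuous hf x one_pos)]
  have hnear : |∫ t in (0 : ℝ)..1, hilbertSymmIntegrand f x t| ≤ 2 * K := by
    simpa using intervalIntegral.norm_integral_le_of_norm_le_const (a := 0) (b := 1)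
      (f := hilbertSymmIntegrand f x) fun t ht =>
        abs_hilbertSymmIntegrand_le_of_lipschitzWith hfK x
          (uIoc_of_le (zero_le_one (α := ℝ)) ▸ ht).1.ne'
  have hfar := abs_integral_Ioi_hilbertSymmIntegrand_le hf x one_pos
  rw [div_one] at hfar
  exact (abs_add_le _ _).trans (add_le_add hnear hfar)

theorem abs_mul_abs_integral_Ioi_zero_hilbertSymmIntegrand_le (hf : Integrable f) {R : ℝ}
    (hR : 0 < R) (hfR : ∀ y, R ≤ |y| → f y = 0) {x : ℝ} (hx : 2 * R ≤ |x|) :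
    |x| * |∫ t in Ioi 0, hilbertSymmIntegrand f x t| ≤ 4 * ∫ t, |f t| := by
  have hs : 0 < |x| / 2 := by linarith
  have hvanish : ∀ t ∈ Ioi 0 \ Ioi (|x| / 2), hilbertSymmIntegrand f x t = 0 := by
    rintro t ⟨ht0, hts⟩
    simp only [mem_Ioi, not_lt] at ht0 hts
    have hsub : f (x - t) = 0 := hfR _ (by linarith [abs_sub_abs_le_abs_sub x t, abs_of_pos ht0])
    have hadd : f (x + t) = 0 := by
      refine hfR _ ?_
      have := abs_sub_abs_le_abs_sub x (-t)
      rw [sub_neg_eq_add, abs_neg] at this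
      linarith [abs_of_pos ht0]
    simp [hilbertSymmIntegrand, hsub, hadd]
  rw [setIntegral_eq_of_subset_of_forall_sdiff_eq_zero measurableSet_Ioi
    (Ioi_subset_Ioi hs.le) hvanish]
  calc |x| * |∫ t in Ioi (|x| / 2), hilbertSymmIntegrand f x t|
      ≤ |x| * (2 * (∫ t, |f t|) / (|x| / 2)) :=
        mul_le_mul_of_nonneg_left (abs_integral_Ioi_hilbertSymmIntegrand_le hf x hs) (abs_nonneg x)
    _ = 4 * ∫ t, |f t| := by field_simp [(by linarith : |x| ≠ 0)]; ring

end Bounds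

/-- If `f : ℝ → ℝ` is continuously differentiable with compact support,
then the principal-value Hilbert transform `Hf(x)` exists for every `x`, and
`|Hf(x)| ≤ C/(1+|x|)` for some constant `C` depending on `f`. -/
theorem hilbert_transform_decay_of_compact_support (f : ℝ → ℝ)
    (hf : ContDiff ℝ 1 f) (hsupp : HasCompactSupport f) :
    ∃ Hf : ℝ → ℝ,
      (∀ x : ℝ, Tendsto (fun ε : ℝ => (1 / π) * ∫ t in {t : ℝ | ε < |t|}, f (x - t) / t)
        (nhdsWithin 0 (Ioi 0)) (nhds (Hf x))) ∧
      ∃ C : ℝ, 0 < C ∧ ∀ x : ℝ, |Hf x| ≤ C / (1 + |x|) := by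
  obtain ⟨K, hfK⟩ := hf.lipschitzWith_of_hasCompactSupport hsupp one_ne_zero
  obtain ⟨R, hR, hfR⟩ := hsupp.exists_pos_le_norm
  have hfi : Integrable f := hf.continuous.integrable_of_hasCompactSupport hsupp
  obtain ⟨C, hC, hJ⟩ := exists_pos_abs_le_div_one_add_abs (by positivity : 0 ≤ 2 * R)
    (abs_integral_Ioi_zero_hilbertSymmIntegrand_le hfK hfi)
    (fun _ => abs_mul_abs_integral_Ioi_zero_hilbertSymmIntegrand_le hfi hR hfR)
  refine ⟨fun x => (1 / π) * ∫ t in Ioi 0, hilbertSymmIntegrand f x t, fun x => ?_,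
    C / π, by positivity, fun x => ?_⟩
  · refine ((tendsto_setIntegral_Ioi_nhdsGT
      (integrableOn_Ioi_zero_hilbertSymmIntegrand hfK hfi x)).const_mul (1 / π)).congr' ?_
    filter_upwards [self_mem_nhdsWithin] with ε hε
    rw [integral_abs_gt_div_eq_integral_Ioi_hilbertSymmIntegrand hfi x hε]
  · rw [abs_mul, abs_of_pos (by positivity), one_div_mul_eq_div, div_right_comm]
    exact div_le_div_of_nonneg_right (hJ x) pi_pos.le
end

section
/- Let φ ∈ L²(ℝ) have Fourier transform supported in (−ω₀, ω₀) for some ω₀ > 0. Then H[φ(x) cos(ω₀ x)] = φ(x) sin(ω₀ x), where H is the Hilbert transform defined in the Fourier domain by multiplication with −i sgn(ω). -/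
open MeasureTheory Filter Real Set Complex

/-!
Writing `cos` and `sin` through `e^{±iω₀x}`, the Fourier transforms of `φ(x) cos(ω₀x)` and
`φ(x) sin(ω₀x)` are `(φ̂(ω - ω₀) + φ̂(ω + ω₀)) / 2` and `i (φ̂(ω + ω₀) - φ̂(ω - ω₀)) / 2`.
Band-limitation kills `φ̂(ω + ω₀)` for `ω ≥ 0` and `φ̂(ω - ω₀)` for `ω ≤ 0`, and in each case
what is left of the two transforms differs exactly by the factor `-i sgn ω`.
-/

/-- Fourier transform in angular frequency; Mathlib's `𝓕` uses the kernel `e^{-2πiξx}`. -/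
noncomputable def fourierAngular (f : ℝ → ℂ) (ω : ℝ) : ℂ :=
  ∫ x : ℝ, f x * exp (-I * ω * x)

lemma MeasureTheory.Integrable.mul_cexp_I_mul {f : ℝ → ℂ} (hf : Integrable f) (a : ℝ) :
    Integrable fun x : ℝ => f x * exp (I * a * x) :=
  hf.mul_bdd (c := 1) (by fun_prop : Continuous _).aestronglyMeasurable
    (.of_forall fun x => by simp [norm_exp])

lemma fourierAngular_add {f g : ℝ → ℂ} (hf : Integrable f) (hg : Integrable g) (ω : ℝ) :
    fourierAngular (fun x => f x + g x) ω = fourierAngular f ω + fourierAngular g ω := by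
  have hexp (x : ℝ) : exp (-I * ω * x) = exp (I * (-ω : ℝ) * x) := by push_cast; ring_nf
  simp only [fourierAngular, add_mul, hexp]
  exact integral_add (hf.mul_cexp_I_mul _) (hg.mul_cexp_I_mul _)

lemma fourierAngular_const_mul (c : ℂ) (f : ℝ → ℂ) (ω : ℝ) :
    fourierAngular (fun x => c * f x) ω = c * fourierAngular f ω := by
  simp only [fourierAngular, mul_assoc, integral_const_mul]

lemma fourierAngular_mul_cexp_I_mul (f : ℝ → ℂ) (a ω : ℝ) :
    fourierAngular (fun x => f x * exp (I * a * x)) ω = fourierAngular f (ω - a) := by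
  refine integral_congr_ae (.of_forall fun x => ?_)
  simp only [mul_assoc, ← Complex.exp_add]
  push_cast
  ring_nf

lemma fourierAngular_mul_cos {f : ℝ → ℂ} (hf : Integrable f) (a ω : ℝ) :
    fourierAngular (fun x => f x * (Real.cos (a * x) : ℂ)) ω =
      (fourierAngular f (ω - a) + fourierAngular f (ω + a)) / 2 := by
  have hcos : (fun x : ℝ => f x * (Real.cos (a * x) : ℂ)) =
      fun x => 2⁻¹ * (f x * exp (I * a * x) + f x * exp (I * (-a : ℝ) * x)) := by
    ext x
    rw [ofReal_cos, Complex.cos]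
    push_cast
    ring_nf
  rw [hcos, fourierAngular_const_mul,
    fourierAngular_add (hf.mul_cexp_I_mul _) (hf.mul_cexp_I_mul _),
    fourierAngular_mul_cexp_I_mul, fourierAngular_mul_cexp_I_mul, sub_neg_eq_add]
  ring

lemma fourierAngular_mul_sin {f : ℝ → ℂ} (hf : Integrable f) (a ω : ℝ) :
    fourierAngular (fun x => f x * (Real.sin (a * x) : ℂ)) ω =
      I * (fourierAngular f (ω + a) - fourierAngular f (ω - a)) / 2 := by
  have hsin : (fun x : ℝ => f x * (Real.sin (a * x) : ℂ)) =
      fun x => (I / 2) * (f x * exp (I * (-a : ℝ) * x) + (-1) * (f x * exp (I * a * x))) := by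
    ext x
    rw [ofReal_sin, Complex.sin]
    push_cast
    ring_nf
  rw [hsin, fourierAngular_const_mul,
    fourierAngular_add (hf.mul_cexp_I_mul _) ((hf.mul_cexp_I_mul _).const_mul _),
    fourierAngular_const_mul, fourierAngular_mul_cexp_I_mul, fourierAngular_mul_cexp_I_mul,
    sub_neg_eq_add]
  ring

theorem bedrosian_identity_general (φ : ℝ → ℂ) (ω₀ : ℝ)
    (hφ1 : Integrable φ)
    (hband : ∀ ω : ℝ, ω ∉ Ioo (-ω₀) ω₀ →
      ∫ x : ℝ, φ x * Complex.exp (-Complex.I * ω * x) = 0) :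
    ∀ ω : ℝ,
      ∫ x : ℝ, (φ x * (Real.sin (ω₀ * x) : ℂ)) * Complex.exp (-Complex.I * ω * x) =
        -Complex.I * (Real.sign ω : ℂ) *
          ∫ x : ℝ, (φ x * (Real.cos (ω₀ * x) : ℂ)) * Complex.exp (-Complex.I * ω * x) := by
  intro ω
  change fourierAngular _ ω = -I * (Real.sign ω : ℂ) * fourierAngular _ ω
  rw [fourierAngular_mul_sin hφ1, fourierAngular_mul_cos hφ1]
  have h_upper (h : 0 ≤ ω) : fourierAngular φ (ω + ω₀) = 0 :=
    hband _ fun hmem => by linarith [hmem.2]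
  have h_lower (h : ω ≤ 0) : fourierAngular φ (ω - ω₀) = 0 :=
    hband _ fun hmem => by linarith [hmem.1]
  rcases lt_trichotomy ω 0 with hω | rfl | hω
  · rw [h_lower hω.le, Real.sign_of_neg hω]
    push_cast
    ring
  · rw [h_lower le_rfl, h_upper le_rfl]
    simp
  · rw [h_upper hω.le, Real.sign_of_pos hω]
    push_cast
    ring

/-- **Bedrosian identity.** If `φ ∈ L²(ℝ)` (taken integrable so that
its Fourier transform `φ̂(ω) = ∫ φ(x)e^{−iωx} dx` is defined pointwise) is bandlimited
to `(−ω₀, ω₀)`, then `H[φ(x)cos(ω₀x)] = φ(x)sin(ω₀x)`, where `H` is defined in the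
Fourier domain by multiplication with `−i sgn(ω)`; equivalently, the Fourier transform
of `φ(x)sin(ω₀x)` equals `−i sgn(ω)` times that of `φ(x)cos(ω₀x)`. -/
theorem bedrosian_identity (φ : ℝ → ℂ) (ω₀ : ℝ) (hω₀ : 0 < ω₀)
    (hφ2 : MemLp φ 2 (volume : Measure ℝ)) (hφ1 : Integrable φ)
    (hband : ∀ ω : ℝ, ω ∉ Ioo (-ω₀) ω₀ →
      ∫ x : ℝ, φ x * Complex.exp (-Complex.I * ω * x) = 0) :
    ∀ ω : ℝ,
      ∫ x : ℝ, (φ x * (Real.sin (ω₀ * x) : ℂ)) * Complex.exp (-Complex.I * ω * x) =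
        -Complex.I * (Real.sign ω : ℂ) *
          ∫ x : ℝ, (φ x * (Real.cos (ω₀ * x) : ℂ)) * Complex.exp (-Complex.I * ω * x) :=
  bedrosian_identity_general φ ω₀ hφ1 hband
end
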